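/- The q-series identity E_4 - E_2^2 = -12 D E_2 holds, where D = q d/dq. -/

import Mathlib

open PowerSeries

/-- The operator `D = q d/dq` on formal power series. -/
noncomputable def Dq (f : PowerSeries ℚ) : PowerSeries ℚ :=
  PowerSeries.mk fun n => (n : ℚ) * PowerSeries.coeff n f

/-- The normalized Eisenstein series `E_2` as a formal `q`-series. -/
noncomputable def E2 : PowerSeries ℚ :=
  PowerSeries.mk fun n => if n = 0 then 1 else -24 * (ArithmeticFunction.sigma 1 n : ℚ)

/-- The normalized Eisenstein series `E_4` as a formal `q`-series. -/
noncomputable def E4 : PowerSeries ℚ :=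
  PowerSeries.mk fun n => if n = 0 then 1 else 240 * (ArithmeticFunction.sigma 3 n : ℚ)

/-- The normalized Eisenstein series `E_6` as a formal `q`-series. -/
noncomputable def E6 : PowerSeries ℚ :=
  PowerSeries.mk fun n => if n = 0 then 1 else -504 * (ArithmeticFunction.sigma 5 n : ℚ)

/-!
Liouville's method. Expanding `σ(m) = ∑_{ab = m} b`, the coefficient of `q^n` in
`(∑ σ(m) q^m)^2` is `∑ b d` over the quadruples of positive integers with `ab + cd = n`. The swap
`(a, b) ↔ (c, d)` and Liouville's map `(a, b, c, d) ↦ (a - c, b, c, b + d)`, which sends the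
quadruples with `c < a` bijectively onto those with `b < d`, relate the sums over the off-diagonal
parts. For `f(b, d) = b^2 - bd + d^2` the map raises `f(b, d) + f(d, b)` by exactly `4bd`, so
`∑ bd` is expressed through sums over the diagonals `a = c` and `b = d`, which are elementary
divisor sums. The outcome is Besge's identity
`12 ∑_{m+k=n} σ(m) σ(k) = 5 σ₃(n) + σ(n) - 6 n σ(n)`, the coefficientwise form of the theorem.
-/

namespace Finset

variable {α β M : Type*} [AddCommMonoid M]

theorem sum_filter_comp_of_involutive {s : Finset α} {σ : α → α} (hσ : Function.Involutive σ)
    (hs : ∀ x, σ x ∈ s ↔ x ∈ s) (p : α → Prop) [DecidablePred p] (F : α → M) :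
    ∑ x ∈ s with p x, F x = ∑ x ∈ s with p (σ x), F (σ x) :=
  (sum_equiv (hσ.toPerm σ) (fun x => by simp [hs]) fun _ _ => rfl).symm

theorem sum_eq_sum_filter_lt_add_sum_filter_eq [LinearOrder β] {s : Finset α} {σ : α → α}
    (hσ : Function.Involutive σ) (hs : ∀ x, σ x ∈ s ↔ x ∈ s) {g h : α → β}
    (hgh : ∀ x, g (σ x) = h x) (F : α → M) :
    ∑ x ∈ s, F x = ∑ x ∈ s with h x < g x, (F x + F (σ x)) + ∑ x ∈ s with g x = h x, F x := by
  have hhg : ∀ x, h (σ x) = g x := fun x => by rw [← hgh, hσ]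
  have hswap : ∑ x ∈ s with g x < h x, F x = ∑ x ∈ s with h x < g x, F (σ x) := by
    rw [sum_filter_comp_of_involutive hσ hs]
    simp only [hgh, hhg]
  rw [sum_add_distrib, ← hswap, sum_filter, sum_filter, sum_filter, ← sum_add_distrib,
    ← sum_add_distrib]
  refine sum_congr rfl fun x _ => ?_
  rcases lt_trichotomy (g x) (h x) with hlt | heq | hgt
  · simp [hlt, hlt.ne, hlt.not_gt]
  · simp [heq]
  · simp [hgt, hgt.ne', hgt.not_gt]

end Finset

open Finset ArithmeticFunction
open scoped ArithmeticFunction.sigma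

theorem sum_range_mul_sub (e : ℕ) : ∑ k ∈ range e, (k : ℚ) * (e - k) = (e ^ 3 - e) / 6 := by
  induction e with
  | zero => simp
  | succ m ih =>
    have gauss : (∑ k ∈ range (m + 1), (k : ℚ)) * 2 = (m + 1) * m := by
      have h := sum_range_id_mul_two (m + 1)
      rw [Nat.add_sub_cancel] at h
      simpa using congrArg (Nat.cast : ℕ → ℚ) h
    have hsplit : ∀ k : ℕ, (k : ℚ) * ((m + 1 : ℕ) - k) = k * (m - k) + k := fun k => by
      push_cast; ring
    rw [sum_congr rfl fun k _ => hsplit k, sum_add_distrib, sum_range_succ, ih]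
    push_cast
    linear_combination gauss / 2

theorem sum_Ioo_mul_sub (e : ℕ) : ∑ k ∈ Ioo 0 e, (k : ℚ) * (e - k) = (e ^ 3 - e) / 6 := by
  rcases e.eq_zero_or_pos with rfl | he
  · simp
  rw [← sum_range_mul_sub, range_eq_Ico, ← Ioo_insert_left he, sum_insert (by simp)]
  simp

def productSumReprs (n : ℕ) : Finset ((ℕ × ℕ) × ℕ × ℕ) :=
  (antidiagonal n).biUnion fun m => m.1.divisorsAntidiagonal ×ˢ m.2.divisorsAntidiagonal

theorem mem_productSumReprs {n a b c d : ℕ} :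
    ((a, b), (c, d)) ∈ productSumReprs n ↔ 0 < a ∧ 0 < b ∧ 0 < c ∧ 0 < d ∧ a * b + c * d = n := by
  simp only [productSumReprs, mem_biUnion, mem_product, HasAntidiagonal.mem_antidiagonal,
    Nat.mem_divisorsAntidiagonal, Prod.exists]
  constructor
  · rintro ⟨_, _, rfl, ⟨rfl, hab⟩, rfl, hcd⟩
    simp_all [Nat.pos_iff_ne_zero]
  · rintro ⟨ha, hb, hc, hd, rfl⟩
    exact ⟨_, _, rfl, ⟨rfl, by positivity⟩, rfl, by positivity⟩

theorem swap_mem_productSumReprs {n : ℕ} (q : (ℕ × ℕ) × ℕ × ℕ) :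
    q.swap ∈ productSumReprs n ↔ q ∈ productSumReprs n := by
  obtain ⟨⟨a, b⟩, c, d⟩ := q
  simp only [Prod.swap_prod_mk, mem_productSumReprs]
  constructor <;> rintro ⟨h₁, h₂, h₃, h₄, rfl⟩ <;> exact ⟨h₃, h₄, h₁, h₂, add_comm _ _⟩

theorem map_swap_mem_productSumReprs {n : ℕ} (q : (ℕ × ℕ) × ℕ × ℕ) :
    Prod.map Prod.swap Prod.swap q ∈ productSumReprs n ↔ q ∈ productSumReprs n := by
  obtain ⟨⟨a, b⟩, c, d⟩ := q
  simp only [Prod.map_apply, Prod.swap_prod_mk, mem_productSumReprs]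
  constructor <;> rintro ⟨h₁, h₂, h₃, h₄, rfl⟩ <;> exact ⟨h₂, h₁, h₄, h₃, by ring⟩

theorem sum_productSumReprs_mul {R : Type*} [CommSemiring R] (f g : ℕ → R) (n : ℕ) :
    ∑ q ∈ productSumReprs n, f q.1.2 * g q.2.2 =
      ∑ m ∈ antidiagonal n,
        (∑ x ∈ m.1.divisorsAntidiagonal, f x.2) * ∑ y ∈ m.2.divisorsAntidiagonal, g y.2 := by
  rw [productSumReprs, sum_biUnion]
  · simp only [sum_mul_sum, sum_product]
  · intro m _ m' _ hmm'
    refine disjoint_left.2 fun q hq hq' => hmm' ?_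
    simp only [mem_product, Nat.mem_divisorsAntidiagonal] at hq hq'
    exact Prod.ext (hq.1.1.symm.trans hq'.1.1) (hq.2.1.symm.trans hq'.2.1)

section

variable {M : Type*} [AddCommMonoid M]

theorem sum_filter_liouvilleMap (n : ℕ) (F : (ℕ × ℕ) × ℕ × ℕ → M) :
    ∑ q ∈ productSumReprs n with q.2.1 < q.1.1, F ((q.1.1 - q.2.1, q.1.2), (q.2.1, q.1.2 + q.2.2)) =
      ∑ q ∈ productSumReprs n with q.1.2 < q.2.2, F q := by
  refine sum_nbij' (fun q => ((q.1.1 - q.2.1, q.1.2), (q.2.1, q.1.2 + q.2.2)))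
    (fun q => ((q.1.1 + q.2.1, q.1.2), (q.2.1, q.2.2 - q.1.2))) ?_ ?_ ?_ ?_ fun _ _ => rfl
  · rintro ⟨⟨a, b⟩, c, d⟩ hq
    simp only [mem_filter, mem_productSumReprs] at hq ⊢
    obtain ⟨⟨ha, hb, hc, hd, rfl⟩, hca⟩ := hq
    refine ⟨⟨by omega, hb, hc, by omega, ?_⟩, by omega⟩
    zify [hca.le]
    ring
  · rintro ⟨⟨a, b⟩, c, d⟩ hq
    simp only [mem_filter, mem_productSumReprs] at hq ⊢
    obtain ⟨⟨ha, hb, hc, hd, rfl⟩, hbd⟩ := hq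
    refine ⟨⟨by omega, hb, hc, by omega, ?_⟩, by omega⟩
    zify [hbd.le]
    ring
  · rintro ⟨⟨a, b⟩, c, d⟩ hq
    have hca : c < a := (mem_filter.1 hq).2
    simp [Nat.sub_add_cancel hca.le]
  · rintro ⟨⟨a, b⟩, c, d⟩ hq
    have hbd : b < d := (mem_filter.1 hq).2
    simp [Nat.add_sub_cancel' hbd.le]

theorem liouville_identity (n : ℕ) (f : ℕ → ℕ → M) :
    ∑ q ∈ productSumReprs n with q.2.1 < q.1.1, (f q.1.2 q.2.2 + f q.2.2 q.1.2) +
        ∑ q ∈ productSumReprs n with q.1.1 = q.2.1, f q.1.2 q.2.2 =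
      ∑ q ∈ productSumReprs n with q.2.1 < q.1.1,
          (f q.1.2 (q.1.2 + q.2.2) + f (q.1.2 + q.2.2) q.1.2) +
        ∑ q ∈ productSumReprs n with q.2.2 = q.1.2, f q.1.2 q.2.2 := by
  have hswap : Function.Involutive (Prod.swap : (ℕ × ℕ) × ℕ × ℕ → _) := Prod.swap_swap
  have h₁ := sum_eq_sum_filter_lt_add_sum_filter_eq hswap (swap_mem_productSumReprs (n := n))
    (g := fun q => q.1.1) (h := fun q => q.2.1) (fun _ => rfl) fun q => f q.1.2 q.2.2
  have h₂ := sum_eq_sum_filter_lt_add_sum_filter_eq hswap (swap_mem_productSumReprs (n := n))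
    (g := fun q => q.2.2) (h := fun q => q.1.2) (fun _ => rfl) fun q => f q.1.2 q.2.2
  rw [sum_filter_liouvilleMap n fun q => f q.1.2 q.2.2 + f q.2.2 q.1.2]
  exact h₁.symm.trans h₂

theorem sum_productSumReprs_filter_fst_eq (n : ℕ) (F : ℕ → ℕ → ℕ → M) :
    ∑ q ∈ productSumReprs n with q.1.1 = q.2.1, F q.1.1 q.1.2 q.2.2 =
      ∑ x ∈ n.divisorsAntidiagonal, ∑ k ∈ Ioo 0 x.2, F x.1 k (x.2 - k) := by
  rw [sum_sigma']
  refine sum_nbij' (fun q => ⟨(q.1.1, q.1.2 + q.2.2), q.1.2⟩)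
    (fun x => ((x.1.1, x.2), (x.1.1, x.1.2 - x.2))) ?_ ?_ ?_ ?_ ?_
  · rintro ⟨⟨a, b⟩, c, d⟩ hq
    simp only [mem_filter, mem_productSumReprs] at hq
    obtain ⟨⟨ha, hb, -, hd, rfl⟩, rfl⟩ := hq
    simp only [mem_sigma, Nat.mem_divisorsAntidiagonal, mem_Ioo]
    exact ⟨⟨by ring, by positivity⟩, hb, by omega⟩
  · rintro ⟨⟨a, e⟩, k⟩ hx
    simp only [mem_sigma, Nat.mem_divisorsAntidiagonal, mem_Ioo] at hx
    obtain ⟨⟨rfl, hn⟩, hk, hke⟩ := hx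
    simp only [mem_filter, mem_productSumReprs, and_true]
    have ha : 0 < a := Nat.pos_of_ne_zero (left_ne_zero_of_mul hn)
    refine ⟨ha, hk, ha, by omega, ?_⟩
    rw [← mul_add, Nat.add_sub_cancel' hke.le]
  · rintro ⟨⟨a, b⟩, c, d⟩ hq
    obtain rfl : a = c := (mem_filter.1 hq).2
    simp
  · rintro ⟨⟨a, e⟩, k⟩ hx
    simp only [mem_sigma, mem_Ioo] at hx
    simp [Nat.add_sub_cancel' hx.2.2.le]
  · rintro ⟨⟨a, b⟩, c, d⟩ hq
    simp

theorem sum_productSumReprs_filter_snd_eq (n : ℕ) (g : ℕ → M) :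
    ∑ q ∈ productSumReprs n with q.2.2 = q.1.2, g q.1.2 =
      ∑ x ∈ n.divisorsAntidiagonal, (x.2 - 1) • g x.1 := by
  have htr : Function.Involutive (Prod.map Prod.swap Prod.swap : (ℕ × ℕ) × ℕ × ℕ → _) :=
    fun _ => rfl
  rw [sum_filter_comp_of_involutive htr (map_swap_mem_productSumReprs (n := n))]
  simp only [Prod.map_fst, Prod.map_snd, Prod.snd_swap]
  rw [filter_congr fun _ _ => eq_comm, sum_productSumReprs_filter_fst_eq n fun a _ _ => g a]
  simp [Nat.card_Ioo]

end

theorem sigma_eq_sum_divisorsAntidiagonal_fst (k n : ℕ) :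
    (σ k n : ℚ) = ∑ x ∈ n.divisorsAntidiagonal, (x.1 : ℚ) ^ k := by
  rw [sigma_apply, Nat.cast_sum, Nat.sum_divisorsAntidiagonal fun d _ => (d : ℚ) ^ k]
  simp

theorem sigma_eq_sum_divisorsAntidiagonal_snd (k n : ℕ) :
    (σ k n : ℚ) = ∑ x ∈ n.divisorsAntidiagonal, (x.2 : ℚ) ^ k := by
  rw [sigma_apply, Nat.cast_sum, Nat.sum_divisorsAntidiagonal' fun _ d => (d : ℚ) ^ k]
  simp

theorem sum_productSumReprs_filter_fst_eq_sq_add_mul_add_sq (n : ℕ) :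
    ∑ q ∈ productSumReprs n with q.1.1 = q.2.1, ((q.1.2 : ℚ) ^ 2 + q.1.2 * q.2.2 + q.2.2 ^ 2) =
      (5 * σ 3 n - 6 * σ 2 n + σ 1 n) / 6 := by
  rw [sum_productSumReprs_filter_fst_eq n fun _ b d => ((b : ℚ) ^ 2 + b * d + d ^ 2),
    sigma_eq_sum_divisorsAntidiagonal_snd, sigma_eq_sum_divisorsAntidiagonal_snd,
    sigma_eq_sum_divisorsAntidiagonal_snd, mul_sum, mul_sum, ← sum_sub_distrib, ← sum_add_distrib,
    sum_div]
  refine sum_congr rfl fun x hx => ?_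
  obtain ⟨hn, hn0⟩ := Nat.mem_divisorsAntidiagonal.1 hx
  have hx2 : 1 ≤ x.2 := Nat.one_le_iff_ne_zero.2 (right_ne_zero_of_mul (hn ▸ hn0))
  have hsq : ∀ k ∈ Ioo 0 x.2, (k : ℚ) ^ 2 + k * (x.2 - k : ℕ) + ((x.2 - k : ℕ) : ℚ) ^ 2 =
      (x.2 : ℚ) ^ 2 - k * (x.2 - k) := fun k hk => by
    rw [Nat.cast_sub (mem_Ioo.1 hk).2.le]
    ring
  rw [sum_congr rfl hsq, sum_sub_distrib, sum_Ioo_mul_sub, sum_const, Nat.card_Ioo, nsmul_eq_mul,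
    Nat.sub_zero, Nat.cast_sub hx2]
  push_cast
  ring

theorem sum_productSumReprs_filter_snd_eq_sq (n : ℕ) :
    ∑ q ∈ productSumReprs n with q.2.2 = q.1.2, (q.1.2 : ℚ) ^ 2 = n * σ 1 n - σ 2 n := by
  rw [sum_productSumReprs_filter_snd_eq n fun b => (b : ℚ) ^ 2,
    sigma_eq_sum_divisorsAntidiagonal_fst, sigma_eq_sum_divisorsAntidiagonal_fst, mul_sum,
    ← sum_sub_distrib]
  refine sum_congr rfl fun x hx => ?_
  obtain ⟨hn, hn0⟩ := Nat.mem_divisorsAntidiagonal.1 hx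
  have hx2 : 1 ≤ x.2 := Nat.one_le_iff_ne_zero.2 (right_ne_zero_of_mul (hn ▸ hn0))
  rw [nsmul_eq_mul, Nat.cast_sub hx2, ← hn]
  push_cast
  ring

theorem sum_productSumReprs_filter_fst_eq_sq_sub_mul_add_sq (n : ℕ) :
    ∑ q ∈ productSumReprs n with q.1.1 = q.2.1, ((q.1.2 : ℚ) ^ 2 - q.1.2 * q.2.2 + q.2.2 ^ 2) =
      4 * ∑ q ∈ productSumReprs n with q.2.1 < q.1.1, (q.1.2 : ℚ) * q.2.2 +
        (n * σ 1 n - σ 2 n) := by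
  let f : ℕ → ℕ → ℚ := fun b d => b ^ 2 - b * d + d ^ 2
  have hshift (b d : ℕ) : f b (b + d) + f (b + d) b = f b d + f d b + 4 * (b * d) := by
    simp only [f]
    push_cast
    ring
  have hoff : ∑ q ∈ productSumReprs n with q.2.1 < q.1.1,
      (f q.1.2 (q.1.2 + q.2.2) + f (q.1.2 + q.2.2) q.1.2) =
      ∑ q ∈ productSumReprs n with q.2.1 < q.1.1, (f q.1.2 q.2.2 + f q.2.2 q.1.2) +
        4 * ∑ q ∈ productSumReprs n with q.2.1 < q.1.1, (q.1.2 : ℚ) * q.2.2 := by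
    rw [mul_sum, ← sum_add_distrib]
    exact sum_congr rfl fun q _ => hshift _ _
  have hdiag : ∑ q ∈ productSumReprs n with q.2.2 = q.1.2, f q.1.2 q.2.2 =
      n * σ 1 n - σ 2 n := by
    rw [← sum_productSumReprs_filter_snd_eq_sq]
    exact sum_congr rfl fun q hq => by simp only [f, (mem_filter.1 hq).2]; ring
  have hliouville := liouville_identity n f
  rw [hoff, hdiag] at hliouville
  linear_combination hliouville

theorem twelve_mul_sum_productSumReprs_mul (n : ℕ) :
    12 * ∑ q ∈ productSumReprs n, (q.1.2 : ℚ) * q.2.2 = 5 * σ 3 n + σ 1 n - 6 * n * σ 1 n := by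
  have hsplit : ∑ q ∈ productSumReprs n, (q.1.2 : ℚ) * q.2.2 =
      2 * ∑ q ∈ productSumReprs n with q.2.1 < q.1.1, (q.1.2 : ℚ) * q.2.2 +
        ∑ q ∈ productSumReprs n with q.1.1 = q.2.1, (q.1.2 : ℚ) * q.2.2 := by
    rw [sum_eq_sum_filter_lt_add_sum_filter_eq Prod.swap_swap (swap_mem_productSumReprs (n := n))
      (g := fun q => q.1.1) (h := fun q => q.2.1) (fun _ => rfl), mul_sum]
    congr 1
    exact sum_congr rfl fun q _ => by simp only [Prod.fst_swap, Prod.snd_swap]; ring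
  have hdiag : ∑ q ∈ productSumReprs n with q.1.1 = q.2.1,
      ((q.1.2 : ℚ) ^ 2 + q.1.2 * q.2.2 + q.2.2 ^ 2) =
      ∑ q ∈ productSumReprs n with q.1.1 = q.2.1, ((q.1.2 : ℚ) ^ 2 - q.1.2 * q.2.2 + q.2.2 ^ 2) +
        2 * ∑ q ∈ productSumReprs n with q.1.1 = q.2.1, (q.1.2 : ℚ) * q.2.2 := by
    rw [mul_sum, ← sum_add_distrib]
    exact sum_congr rfl fun q _ => by ring
  rw [sum_productSumReprs_filter_fst_eq_sq_add_mul_add_sq,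
    sum_productSumReprs_filter_fst_eq_sq_sub_mul_add_sq] at hdiag
  linear_combination 12 * hsplit - 6 * hdiag

noncomputable def sigmaSeries (k : ℕ) : PowerSeries ℚ :=
  PowerSeries.mk fun n => (σ k n : ℚ)

theorem E2_eq : E2 = 1 - 24 * sigmaSeries 1 := by
  ext (_ | n) <;> simp [E2, sigmaSeries, coeff_one, ← map_ofNat C, coeff_C_mul]

theorem E4_eq : E4 = 1 + 240 * sigmaSeries 3 := by
  ext (_ | n) <;> simp [E4, sigmaSeries, coeff_one, ← map_ofNat C, coeff_C_mul]

theorem Dq_E2 : Dq E2 = -24 * Dq (sigmaSeries 1) := by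
  ext (_ | n)
  · simp [Dq]
  · simp [Dq, E2, sigmaSeries, ← map_ofNat C, coeff_C_mul]
    ring

theorem coeff_sigmaSeries_one_sq (n : ℕ) :
    coeff n (sigmaSeries 1 ^ 2) = ∑ q ∈ productSumReprs n, (q.1.2 : ℚ) * q.2.2 := by
  simp only [sq, coeff_mul, sigmaSeries, coeff_mk, sigma_eq_sum_divisorsAntidiagonal_snd, pow_one,
    sum_productSumReprs_mul]

theorem twelve_mul_sigmaSeries_one_sq :
    12 * sigmaSeries 1 ^ 2 = 5 * sigmaSeries 3 + sigmaSeries 1 - 6 * Dq (sigmaSeries 1) := by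
  ext n
  simp only [← map_ofNat C, map_sub, map_add, coeff_C_mul]
  rw [coeff_sigmaSeries_one_sq, twelve_mul_sum_productSumReprs_mul]
  simp only [Dq, sigmaSeries, coeff_mk]
  ring

theorem stmt11 : E4 - E2 ^ 2 = -12 * Dq E2 := by
  rw [E4_eq, Dq_E2, E2_eq]
  linear_combination (-48) * twelve_mul_sigmaSeries_one_sq
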